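/- Let G be an acyclic directed mixed graph containing at least one head of size 3 or more. Then G contains two heads of the form {v_1, v_2} and {v_2, v_3}, where v_1, v_2, v_3 are distinct and the set {v_1, v_2, v_3} is barren in G. -/

import Mathlib

open Finset

open scoped Classical

variable {V : Type} [Fintype V] [DecidableEq V]

/-- An acyclic directed mixed graph (ADMG): directed edges `dir` and a symmetric
irreflexive set of bidirected edges `bi`, with no directed cycle. -/
structure ADMG (V : Type) [Fintype V] [DecidableEq V] where
  dir : V → V → Prop
  bi : V → V → Prop
  bi_symm : ∀ {v w}, bi v w → bi w v
  bi_irrefl : ∀ v, ¬ bi v v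
  acyclic : ∀ v, ¬ Relation.TransGen dir v v

namespace ADMG

/-- Ancestors of (members of) `A`: vertices `w` with `w = a` or a directed path `w → ⋯ → a`
for some `a ∈ A`. -/
noncomputable def anc (G : ADMG V) (A : Finset V) : Finset V :=
  univ.filter fun w => ∃ a ∈ A, Relation.ReflTransGen G.dir w a

/-- Descendants of (members of) `A`. -/
noncomputable def dec (G : ADMG V) (A : Finset V) : Finset V :=
  univ.filter fun w => ∃ a ∈ A, Relation.ReflTransGen G.dir a w

/-- Parents of (members of) `A`. -/
noncomputable def pa (G : ADMG V) (A : Finset V) : Finset V :=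
  univ.filter fun w => ∃ a ∈ A, G.dir w a

/-- `barren_G(U)`: members of `U` with no non-trivial descendant in `U`. -/
noncomputable def barren (G : ADMG V) (U : Finset V) : Finset V :=
  U.filter fun v => G.dec {v} ∩ U = {v}

/-- `U` is barren if `barren_G(U) = U`. -/
def IsBarren (G : ADMG V) (U : Finset V) : Prop := G.barren U = U

/-- One bidirected step inside the induced subgraph `G_S`. -/
def biStep (G : ADMG V) (S : Finset V) (u w : V) : Prop :=
  u ∈ S ∧ w ∈ S ∧ G.bi u w

/-- District of (members of) `A` in the induced subgraph `G_S`: vertices joined to a member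
of `A` by a (possibly empty) bidirected path within `S`. -/
noncomputable def disIn (G : ADMG V) (S A : Finset V) : Finset V :=
  univ.filter fun w => ∃ a ∈ A, a ∈ S ∧ w ∈ S ∧ Relation.ReflTransGen (G.biStep S) a w

/-- District in the whole graph. -/
noncomputable def dis (G : ADMG V) (A : Finset V) : Finset V := G.disIn univ A

/-- A head: a nonempty barren set connected by bidirected paths in `G_{an_G(H)}`. -/
def IsHead (G : ADMG V) (H : Finset V) : Prop :=
  H.Nonempty ∧ G.IsBarren H ∧
    ∀ a ∈ H, ∀ b ∈ H, Relation.ReflTransGen (G.biStep (G.anc H)) a b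

/-- The tail of a head: `tail_G(H) = pa_G(D) ∪ (D ∖ H)` where `D = dis_{G_{an(H)}}(H)`. -/
noncomputable def tail (G : ADMG V) (H : Finset V) : Finset V :=
  G.pa (G.disIn (G.anc H) H) ∪ (G.disIn (G.anc H) H \ H)

end ADMG

/-- `Gbar` is a head-preserving completion of `G`: a complete supergraph (on the same
vertices) in which every head of `G` is still a head. -/
def IsHPC (G Gbar : ADMG V) : Prop :=
  (∀ v w, G.dir v w → Gbar.dir v w) ∧
  (∀ v w, G.bi v w → Gbar.bi v w) ∧
  (∀ v w : V, v ≠ w → Gbar.dir v w ∨ Gbar.dir w v ∨ Gbar.bi v w) ∧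
  (∀ H : Finset V, G.IsHead H → Gbar.IsHead H)

/-- Type of an edge on a path, read from left to right:
`u → w`, `u ← w`, or `u ↔ w`. -/
inductive EdgeType : Type
  | toRight
  | toLeft
  | biE

/-- The edge of the given type is present in `G` between `u` (left) and `w` (right). -/
def edgeOK (G : ADMG V) : EdgeType → V → V → Prop
  | .toRight, u, w => G.dir u w
  | .toLeft,  u, w => G.dir w u
  | .biE,     u, w => G.bi u w

/-- The edge has an arrowhead at its right endpoint. -/
def arrowAtRight : EdgeType → Prop
  | .toRight => True
  | .toLeft  => False
  | .biE     => True

/-- The edge has an arrowhead at its left endpoint. -/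
def arrowAtLeft : EdgeType → Prop
  | .toRight => False
  | .toLeft  => True
  | .biE     => True

/-- A path from `x` to `y` in the mixed graph `G`: distinct vertices `f 0, …, f n`
joined by edges of the recorded types. -/
structure GPath (G : ADMG V) (x y : V) where
  n : ℕ
  f : Fin (n + 1) → V
  inj : Function.Injective f
  first : f 0 = x
  last : f (Fin.last n) = y
  e : Fin n → EdgeType
  ok : ∀ i : Fin n, edgeOK G (e i) (f i.castSucc) (f i.succ)

/-- The interior vertex `f (i+1)` is a collider on the path: both incident edges
have an arrowhead at it. -/
def GPath.colliderAt {G : ADMG V} {x y : V} (w : GPath G x y)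
    (i : ℕ) (h : i + 1 < w.n) : Prop :=
  arrowAtRight (w.e ⟨i, by omega⟩) ∧ arrowAtLeft (w.e ⟨i + 1, h⟩)

/-- The path is blocked by `C`: some interior non-collider is in `C`, or some interior
collider is outside `an_G(C)`. -/
def GPath.Blocked {G : ADMG V} {x y : V} (w : GPath G x y) (C : Finset V) : Prop :=
  ∃ (i : ℕ) (h : i + 1 < w.n),
    (¬ w.colliderAt i h ∧ w.f ⟨i + 1, by omega⟩ ∈ C) ∨
    (w.colliderAt i h ∧ w.f ⟨i + 1, by omega⟩ ∉ G.anc C)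

/-- m-separation of `A` and `B` given `C` in `G`. -/
def MSep (G : ADMG V) (A B C : Finset V) : Prop :=
  ∀ a ∈ A, ∀ b ∈ B, ∀ w : GPath G a b, w.Blocked C

/-!
Two distinct members `x`, `y` of a head `H` are incomparable and joined by a bidirected walk
inside `an(H)`; as `H` is barren, no vertex of the walk is a proper descendant of `x` or `y`.
If every vertex of the walk is an ancestor of `x` or `y`, then `{x, y}` is a head. Otherwise
some vertex `w` of the walk is not, and we take one with no proper descendant on the walk: it is
incomparable with `x` and `y` and splits the walk into two shorter walks of the same kind. By
induction on the length, either a shorter walk already yields the two heads, or `{x, w}` and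
`{w, y}` are heads and `{x, w, y}` is barren. For three members `a, b, c` of `H`, unless one of
the pairs `{a, b}`, `{b, c}` already yields the two heads, both are heads and `{a, b, c} ⊆ H` is
barren.
-/

namespace ADMG

variable {G : ADMG V}

local notation:50 u:51 " ≼[" G "] " v:51 => Relation.ReflTransGen (ADMG.dir G) u v

def HasOverlappingPairHeads (G : ADMG V) : Prop :=
  ∃ v₁ v₂ v₃ : V, v₁ ≠ v₂ ∧ v₂ ≠ v₃ ∧ v₁ ≠ v₃ ∧
    G.IsHead {v₁, v₂} ∧ G.IsHead {v₂, v₃} ∧ G.IsBarren {v₁, v₂, v₃}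

theorem eq_of_reflTransGen_dir {a b : V} (hab : a ≼[G] b) (hba : b ≼[G] a) : a = b := by
  rcases Relation.reflTransGen_iff_eq_or_transGen.mp hab with h | h
  · exact h.symm
  · exact absurd (h.trans_left hba) (G.acyclic a)

theorem exists_maximal (G : ADMG V) (s : Set V) (hs : s.Nonempty) :
    ∃ w ∈ s, ∀ v ∈ s, w ≼[G] v → v = w := by
  have : IsTrans V (flip (Relation.TransGen G.dir)) := ⟨fun _ _ _ hab hbc => hbc.trans hab⟩
  have : Std.Irrefl (flip (Relation.TransGen G.dir)) := ⟨G.acyclic⟩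
  obtain ⟨w, hw, hmax⟩ :=
    (Finite.wellFounded_of_trans_of_irrefl (flip (Relation.TransGen G.dir))).has_min s hs
  refine ⟨w, hw, fun v hv hwv => ?_⟩
  rcases Relation.reflTransGen_iff_eq_or_transGen.mp hwv with h | h
  · exact h
  · exact absurd h (hmax v hv)

@[simp]
theorem mem_anc {A : Finset V} {w : V} : w ∈ G.anc A ↔ ∃ a ∈ A, w ≼[G] a := by
  simp [anc]

@[simp]
theorem mem_dec_singleton {v w : V} : w ∈ G.dec {v} ↔ v ≼[G] w := by
  simp [dec]

theorem isBarren_iff {U : Finset V} :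
    G.IsBarren U ↔ ∀ u ∈ U, ∀ v ∈ U, u ≼[G] v → u = v := by
  rw [IsBarren, barren, filter_eq_self]
  simp only [Finset.ext_iff, mem_inter, mem_dec_singleton, mem_singleton]
  constructor
  · intro h u hu v hv huv
    exact ((h u hu v).mp ⟨huv, hv⟩).symm
  · intro h u hu v
    exact ⟨fun ⟨huv, hv⟩ => (h u hu v hv huv).symm, by rintro rfl; exact ⟨.refl, hu⟩⟩

theorem IsBarren.subset {U T : Finset V} (hU : G.IsBarren U) (hTU : T ⊆ U) : G.IsBarren T := by
  rw [isBarren_iff] at hU ⊢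
  exact fun u hu v hv => hU u (hTU hu) v (hTU hv)

theorem IsBarren.insert {U : Finset V} {a : V} (hU : G.IsBarren U)
    (ha : ∀ u ∈ U, ¬ a ≼[G] u ∧ ¬ u ≼[G] a) : G.IsBarren (insert a U) := by
  rw [isBarren_iff] at hU ⊢
  simp only [mem_insert, forall_eq_or_imp]
  refine ⟨⟨fun _ => trivial, fun v hv hav => absurd hav (ha v hv).1⟩,
    fun u hu => ⟨fun hua => absurd hua (ha u hu).2, hU u hu⟩⟩

theorem isBarren_pair {x y : V} (hxy : ¬ x ≼[G] y) (hyx : ¬ y ≼[G] x) : G.IsBarren {x, y} :=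
  IsBarren.insert (isBarren_iff.mpr (by simp)) (by simpa using ⟨hxy, hyx⟩)

theorem IsBarren.eq_of_reflTransGen_of_mem_anc {H : Finset V} {a v : V} (hH : G.IsBarren H)
    (ha : a ∈ H) (hv : v ∈ G.anc H) (hav : a ≼[G] v) : v = a := by
  obtain ⟨b, hb, hvb⟩ := mem_anc.mp hv
  obtain rfl := isBarren_iff.mp hH a ha b hb (hav.trans hvb)
  exact eq_of_reflTransGen_dir hvb hav

instance (S : Finset V) : Std.Symm (G.biStep S) :=
  ⟨fun _ _ ⟨hu, hw, h⟩ => ⟨hw, hu, G.bi_symm h⟩⟩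

theorem reflTransGen_biStep_of_isChain {S : Finset V} {x y : V} {l : List V}
    (hc : (x :: (l ++ [y])).IsChain G.bi) (hS : ∀ v ∈ x :: (l ++ [y]), v ∈ S) :
    Relation.ReflTransGen (G.biStep S) x y := by
  refine List.relationReflTransGen_of_exists_isChain_cons _
    (hc.imp_of_mem_imp fun u w hu hw h => ⟨hS u hu, hS w hw, h⟩) ?_
  simp

theorem exists_isChain_of_reflTransGen_biStep {S : Finset V} {x y : V}
    (h : Relation.ReflTransGen (G.biStep S) x y) (hxy : x ≠ y) :
    ∃ l : List V, (x :: (l ++ [y])).IsChain G.bi ∧ ∀ v ∈ l, v ∈ S := by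
  induction h with
  | refl => exact absurd rfl hxy
  | @tail b c _ hbc ih =>
    by_cases hxb : x = b
    · subst hxb
      exact ⟨[], List.isChain_pair.mpr hbc.2.2, by simp⟩
    · obtain ⟨l, hl, hlS⟩ := ih hxb
      refine ⟨l ++ [b], ?_, ?_⟩
      · simpa using ⟨hl, hbc.2.2⟩
      · simp only [List.mem_append, List.mem_singleton]
        rintro v (hv | rfl)
        exacts [hlS v hv, hbc.1]

theorem isHead_pair {x y : V} (hxy : ¬ x ≼[G] y) (hyx : ¬ y ≼[G] x)
    (hconn : Relation.ReflTransGen (G.biStep (G.anc {x, y})) x y) : G.IsHead {x, y} := by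
  refine ⟨insert_nonempty x {y}, isBarren_pair hxy hyx, ?_⟩
  simp only [mem_insert, mem_singleton, forall_eq_or_imp, forall_eq]
  exact ⟨⟨.refl, hconn⟩, Std.Symm.symm _ _ hconn, .refl⟩

theorem hasOverlappingPairHeads_or_isHead_pair_of_isChain (l : List V) {x y : V}
    (hc : (x :: (l ++ [y])).IsChain G.bi) (hxy : ¬ x ≼[G] y) (hyx : ¬ y ≼[G] x)
    (hx : ∀ v ∈ l, x ≼[G] v → v = x) (hy : ∀ v ∈ l, y ≼[G] v → v = y) :
    G.HasOverlappingPairHeads ∨ G.IsHead {x, y} := by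
  by_cases hanc : ∀ v ∈ l, v ≼[G] x ∨ v ≼[G] y
  · refine .inr (isHead_pair hxy hyx (reflTransGen_biStep_of_isChain hc ?_))
    simp only [List.mem_cons, List.mem_append, List.not_mem_nil, or_false, mem_anc, mem_insert,
      mem_singleton, exists_eq_or_imp, exists_eq_left]
    rintro v (rfl | hv | rfl)
    exacts [.inl .refl, hanc v hv, .inr .refl]
  push Not at hanc
  obtain ⟨v, hv, hvx, hvy⟩ := hanc
  obtain ⟨w, ⟨hwl, hwx, hwy⟩, hwmax⟩ :=
    G.exists_maximal {v | v ∈ l ∧ ¬ v ≼[G] x ∧ ¬ v ≼[G] y} ⟨v, hv, hvx, hvy⟩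
  have hxw : ¬ x ≼[G] w := fun h => hwx (hx w hwl h ▸ .refl)
  have hyw : ¬ y ≼[G] w := fun h => hwy (hy w hwl h ▸ .refl)
  have hw : ∀ v ∈ l, w ≼[G] v → v = w := fun v hv hwv =>
    hwmax v ⟨hv, fun h => hwx (hwv.trans h), fun h => hwy (hwv.trans h)⟩ hwv
  obtain ⟨l₁, l₂, rfl⟩ := List.append_of_mem hwl
  have ⟨hc₁, hc₂⟩ :
      (x :: (l₁ ++ [w])).IsChain G.bi ∧ (w :: (l₂ ++ [y])).IsChain G.bi := by
    rwa [List.append_assoc, List.cons_append, List.isChain_cons_split] at hc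
  have mem₁ : ∀ v ∈ l₁, v ∈ l₁ ++ w :: l₂ := fun v hv => by simp [hv]
  have mem₂ : ∀ v ∈ l₂, v ∈ l₁ ++ w :: l₂ := fun v hv => by simp [hv]
  rcases hasOverlappingPairHeads_or_isHead_pair_of_isChain l₁ hc₁ hxw hwx
    (fun v hv => hx v (mem₁ v hv)) (fun v hv => hw v (mem₁ v hv)) with h | hxw'
  · exact .inl h
  rcases hasOverlappingPairHeads_or_isHead_pair_of_isChain l₂ hc₂ hwy hyw
    (fun v hv => hw v (mem₂ v hv)) (fun v hv => hy v (mem₂ v hv)) with h | hwy'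
  · exact .inl h
  refine .inl ⟨x, w, y, fun h => hxw (h ▸ .refl), fun h => hwy (h ▸ .refl),
    fun h => hxy (h ▸ .refl), hxw', hwy', hwy'.2.1.insert ?_⟩
  simpa using ⟨⟨hxw, hwx⟩, hxy, hyx⟩
termination_by l.length
decreasing_by all_goals (subst_vars; simp only [List.length_append, List.length_cons]; omega)

theorem hasOverlappingPairHeads_or_isHead_pair_of_isHead {H : Finset V} (hH : G.IsHead H)
    {a b : V} (ha : a ∈ H) (hb : b ∈ H) (hab : a ≠ b) :
    G.HasOverlappingPairHeads ∨ G.IsHead {a, b} := by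
  obtain ⟨-, hbar, hconn⟩ := hH
  obtain ⟨l, hc, hl⟩ := exists_isChain_of_reflTransGen_biStep (hconn a ha b hb) hab
  exact hasOverlappingPairHeads_or_isHead_pair_of_isChain l hc
    (fun h => hab (isBarren_iff.mp hbar a ha b hb h))
    (fun h => hab (isBarren_iff.mp hbar b hb a ha h).symm)
    (fun v hv => hbar.eq_of_reflTransGen_of_mem_anc ha (hl v hv))
    (fun v hv => hbar.eq_of_reflTransGen_of_mem_anc hb (hl v hv))

end ADMG

/-- if `G` contains a head of size at least 3, then it contains heads
`{v₁, v₂}` and `{v₂, v₃}` with `v₁, v₂, v₃` distinct and `{v₁, v₂, v₃}` barren. -/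
theorem exists_overlapping_two_heads (G : ADMG V) (H : Finset V)
    (hH : G.IsHead H) (hcard : 3 ≤ H.card) :
    ∃ v₁ v₂ v₃ : V, v₁ ≠ v₂ ∧ v₂ ≠ v₃ ∧ v₁ ≠ v₃ ∧
      G.IsHead {v₁, v₂} ∧ G.IsHead {v₂, v₃} ∧
      G.IsBarren {v₁, v₂, v₃} := by
  obtain ⟨a, ha, b, hb, c, hc, hab, hac, hbc⟩ := two_lt_card.mp hcard
  rcases ADMG.hasOverlappingPairHeads_or_isHead_pair_of_isHead hH ha hb hab with h | hab'
  · exact h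
  rcases ADMG.hasOverlappingPairHeads_or_isHead_pair_of_isHead hH hb hc hbc with h | hbc'
  · exact h
  refine ⟨a, b, c, hab, hbc, hac, hab', hbc', hH.2.1.subset ?_⟩
  simp [insert_subset_iff, ha, hb, hc]
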